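/- arXiv:0811.2340 — 6 statements merged into one kernel-verified Lean document; each statement's English description precedes it below -/
import Mathlib

section
/- Let T : C → A be a functor satisfying: (Ax0) every isomorphism f : T(C) → A' in A lifts to an isomorphism g : C → C' in C with T(g) = f; (Ax2) C and A admit pushouts and T preserves them; (Ax3) every nonempty strict fiber of T has a terminal object. Then the resulting assignment Max : C → C, sending C to the terminal object of the fiber over T(C), together with Max on morphisms defined via pushout along the canonical map ι^C : C → Max(C), is a functor, and the maps ι^C form a natural transformation from the identity functor to Max. -/
/-! For `f : X ⟶ Y`, the pushout `P` of `ι_X` and `f` maps under `T` to the pushout of the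
identity `T(ι_X)`, so `T(inr) : T Y ⟶ T P` is an isomorphism. Lifting its inverse by (Ax0) moves
`P` into the fiber over `T Y`, and terminality of `Max Y` there then shows that maps
`P ⟶ Max Y` lying over `T(inr)⁻¹` exist and are unique. By the universal property of the pushout,
`Max(f)` is therefore the unique map with `ι_X ≫ Max(f) = f ≫ ι_Y`, and this uniqueness gives
the functor laws and naturality of `ι`. -/

open CategoryTheory Limits

universe v₁ v₂ u₁ u₂

variable {C : Type u₁} [Category.{v₁} C] {A : Type u₂} [Category.{v₂} A]

/-- Axiom (Ax0): every isomorphism `f : T(C) ≅ A'` in `A` lifts to an isomorphism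
`g : C ≅ C'` in `C` with `T(g) = f` (and in particular `T(C') = A'`). -/
def Ax0 (T : C ⥤ A) : Prop :=
  ∀ (X : C) (a' : A) (f : T.obj X ≅ a'), ∃ (X' : C) (h : T.obj X' = a') (g : X ≅ X'),
    T.map g.hom = f.hom ≫ eqToHom h.symm

/-- The strict fiber of `T : C ⥤ A` over `a : A`. -/
structure StrictFiber (T : C ⥤ A) (a : A) where
  obj : C
  eq : T.obj obj = a

instance (T : C ⥤ A) (a : A) : Category (StrictFiber T a) where
  Hom X Y := { g : X.obj ⟶ Y.obj // T.map g = eqToHom (X.eq.trans Y.eq.symm) }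
  id X := ⟨𝟙 X.obj, by simp⟩
  comp {X Y Z} f g := ⟨f.1 ≫ g.1, by rw [T.map_comp, f.2, g.2, eqToHom_trans]⟩
  id_comp f := Subtype.ext (Category.id_comp _)
  comp_id f := Subtype.ext (Category.comp_id _)
  assoc f g h := Subtype.ext (Category.assoc _ _ _)

variable {T : C ⥤ A}

namespace StrictFiber

lemma hom_ext_of_isTerminal {a : A} {M : StrictFiber T a} (hM : IsTerminal M) {Z : C}
    (hZ : T.obj Z = a) {g₁ g₂ : Z ⟶ M.obj} (h₁ : T.map g₁ = eqToHom (hZ.trans M.eq.symm))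
    (h₂ : T.map g₂ = eqToHom (hZ.trans M.eq.symm)) : g₁ = g₂ :=
  congrArg Subtype.val
    (hM.hom_ext (⟨g₁, h₁⟩ : (⟨Z, hZ⟩ : StrictFiber T a) ⟶ M) ⟨g₂, h₂⟩)

end StrictFiber

theorem Ax0.existsUnique_hom_to_isTerminal (hT : Ax0 T) {a : A} {M : StrictFiber T a}
    (hM : IsTerminal M) {Z : C} (α : T.obj Z ≅ a) :
    ∃! k : Z ⟶ M.obj, T.map k = α.hom ≫ eqToHom M.eq.symm := by
  obtain ⟨Z', hZ', g, hg⟩ := hT Z a α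
  have hα : α.hom = T.map g.hom ≫ eqToHom hZ' := by simp [hg]
  refine ⟨g.hom ≫ (hM.from ⟨Z', hZ'⟩).1, ?_, fun k hk => ?_⟩
  · simp [(hM.from ⟨Z', hZ'⟩).2, hg]
  · refine (cancel_epi g.inv).1 (StrictFiber.hom_ext_of_isTerminal hM hZ' ?_ ?_)
    · simp [hk, hα]
    · simp [(hM.from ⟨Z', hZ'⟩).2]

section Max

variable (T) [∀ X : C, HasTerminal (StrictFiber T (T.obj X))]

noncomputable abbrev maxObj (X : C) : C := (⊤_ (StrictFiber T (T.obj X))).obj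

noncomputable def toMax (X : C) : X ⟶ maxObj T X :=
  (terminal.from (⟨X, rfl⟩ : StrictFiber T (T.obj X))).1

lemma map_toMax (X : C) : T.map (toMax T X) = eqToHom (⊤_ (StrictFiber T (T.obj X))).eq.symm :=
  (terminal.from (⟨X, rfl⟩ : StrictFiber T (T.obj X))).2

variable {T}

theorem existsUnique_toMax_comp_eq [HasPushouts C] [PreservesColimitsOfShape WalkingSpan T]
    (hT : Ax0 T) {X Y : C} (f : X ⟶ Y) :
    ∃! u : maxObj T X ⟶ maxObj T Y, toMax T X ≫ u = f ≫ toMax T Y := by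
  have : IsIso (T.map (pushout.inr (toMax T X) f)) :=
    (T.map_isPushout (IsPushout.of_hasPushout (toMax T X) f)).isIso_inr_of_isIso
      (by rw [map_toMax]; infer_instance)
  obtain ⟨k, hk, hk_unique⟩ :=
    hT.existsUnique_hom_to_isTerminal terminalIsTerminal
      (asIso (T.map (pushout.inr (toMax T X) f))).symm
  have hinr : pushout.inr (toMax T X) f ≫ k = toMax T Y :=
    StrictFiber.hom_ext_of_isTerminal terminalIsTerminal rfl (by simp [hk]) (map_toMax T Y)
  refine ⟨pushout.inl (toMax T X) f ≫ k, ?_, fun u hu => ?_⟩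
  · dsimp only
    rw [pushout.condition_assoc, hinr]
  · have hdesc : pushout.desc u (toMax T Y) hu = k := by
      refine hk_unique _ ?_
      dsimp only
      rw [Iso.symm_hom, asIso_inv, IsIso.eq_inv_comp, ← T.map_comp, pushout.inr_desc, map_toMax]
    rw [← hdesc, pushout.inl_desc]

variable [HasPushouts C] [PreservesColimitsOfShape WalkingSpan T] (hT : Ax0 T)

noncomputable def maxMap {X Y : C} (f : X ⟶ Y) : maxObj T X ⟶ maxObj T Y :=
  (existsUnique_toMax_comp_eq hT f).exists.choose

lemma toMax_comp_maxMap {X Y : C} (f : X ⟶ Y) : toMax T X ≫ maxMap hT f = f ≫ toMax T Y :=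
  (existsUnique_toMax_comp_eq hT f).exists.choose_spec

lemma eq_maxMap {X Y : C} {f : X ⟶ Y} {u : maxObj T X ⟶ maxObj T Y}
    (hu : toMax T X ≫ u = f ≫ toMax T Y) : u = maxMap hT f :=
  (existsUnique_toMax_comp_eq hT f).unique hu (toMax_comp_maxMap hT f)

noncomputable def maxFunctor : C ⥤ C where
  obj := maxObj T
  map := maxMap hT
  map_id X := (eq_maxMap hT (by simp)).symm
  map_comp f g := (eq_maxMap hT (by simp [reassoc_of% toMax_comp_maxMap hT f,
    toMax_comp_maxMap hT g])).symm

noncomputable def toMaxNatTrans : 𝟭 C ⟶ maxFunctor hT where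
  app := toMax T
  naturality _ _ f := (toMax_comp_maxMap hT f).symm

end Max

theorem max_functor_exists_general (T : C ⥤ A) (hAx0 : Ax0 T)
    [HasPushouts C] [PreservesColimitsOfShape WalkingSpan T]
    (hAx3 : ∀ a : A, Nonempty (StrictFiber T a) → HasTerminal (StrictFiber T a)) :
    ∃ (M : C ⥤ C) (ι : 𝟭 C ⟶ M),
      ∀ X : C, ∃ h : T.obj (M.obj X) = T.obj X,
        T.map (ι.app X) = eqToHom h.symm ∧
        Nonempty (IsTerminal (⟨M.obj X, h⟩ : StrictFiber T (T.obj X))) := by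
  have : ∀ X : C, HasTerminal (StrictFiber T (T.obj X)) := fun X => hAx3 _ ⟨⟨X, rfl⟩⟩
  exact ⟨maxFunctor hAx0, toMaxNatTrans hAx0,
    fun X => ⟨(⊤_ (StrictFiber T (T.obj X))).eq, map_toMax T X, ⟨terminalIsTerminal⟩⟩⟩

/-- under (Ax0), (Ax2) (pushouts exist in `C` and `A` and are preserved by `T`)
and (Ax3) (nonempty strict fibers have terminal objects), the assignment sending `X` to the
terminal object of the strict fiber over `T.obj X` extends to a functor `Max : C ⥤ C`, and the
canonical maps `ι_X : X ⟶ Max X` (which satisfy `T(ι_X) = id`) form a natural transformation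
from the identity functor to `Max`. -/
theorem max_functor_exists (T : C ⥤ A) (hAx0 : Ax0 T)
    [HasPushouts C] [HasPushouts A] [PreservesColimitsOfShape WalkingSpan T]
    (hAx3 : ∀ a : A, Nonempty (StrictFiber T a) → HasTerminal (StrictFiber T a)) :
    ∃ (M : C ⥤ C) (ι : 𝟭 C ⟶ M),
      ∀ X : C, ∃ h : T.obj (M.obj X) = T.obj X,
        T.map (ι.app X) = eqToHom h.symm ∧
        Nonempty (IsTerminal (⟨M.obj X, h⟩ : StrictFiber T (T.obj X))) :=
  max_functor_exists_general T hAx0 hAx3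
end

section
/- Under axioms (Ax0), (Ax2), (Ax3), for a morphism f : C → C' in C, T(f) is an isomorphism if and only if Max(f) is an isomorphism. -/
open CategoryTheory Limits

universe v₁ v₂ u₁ u₂

variable {C : Type u₁} [Category.{v₁} C] {A : Type u₂} [Category.{v₂} A]

/-- The data of the functor `Max` of the pylonet formalism: a functor `F : C ⥤ C` together
with a natural transformation `ι : 𝟭 C ⟶ F` such that for every `X`, `F.obj X` lies in the
strict fiber of `T` over `T.obj X`, `T(ι_X) = id`, and `F.obj X` is a terminal object of that
strict fiber (axiom (Ax3)). -/
structure MaxData (T : C ⥤ A) where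
  F : C ⥤ C
  ι : 𝟭 C ⟶ F
  fiber_eq : ∀ X : C, T.obj (F.obj X) = T.obj X
  ι_eq : ∀ X : C, T.map (ι.app X) = eqToHom (fiber_eq X).symm
  terminal : ∀ (X Y : C) (h : T.obj Y = T.obj X),
    ∃! g : Y ⟶ F.obj X, T.map g = eqToHom (h.trans (fiber_eq X).symm)

/-- An object is maximal when the canonical map `ι_X : X ⟶ Max X` is an isomorphism. -/
def Pmax {T : C ⥤ A} (M : MaxData T) : C → Prop := fun X => IsIso (M.ι.app X)

namespace MaxData

variable {T : C ⥤ A} (M : MaxData T)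

lemma T_map_F_map {X Y : C} (f : X ⟶ Y) :
    T.map (M.F.map f) = eqToHom (M.fiber_eq X) ≫ T.map f ≫ eqToHom (M.fiber_eq Y).symm := by
  have h := congrArg T.map (M.ι.naturality f)
  simp only [Functor.map_comp, Functor.id_map, M.ι_eq] at h
  rw [h, eqToHom_trans_assoc, eqToHom_refl, Category.id_comp]

lemma isIso_T_map_F_map_iff {X Y : C} (f : X ⟶ Y) :
    IsIso (T.map (M.F.map f)) ↔ IsIso (T.map f) := by
  rw [M.T_map_F_map, isIso_comp_left_iff, isIso_comp_right_iff]

lemma eq_id_of_T_map_eq_id {X : C} (g : M.F.obj X ⟶ M.F.obj X) (hg : T.map g = 𝟙 _) :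
    g = 𝟙 _ := by
  obtain ⟨m, -, hm⟩ := M.terminal X (M.F.obj X) (M.fiber_eq X)
  exact (hm g (by simp [hg])).trans (hm (𝟙 _) (by simp)).symm

/-- (Ax0) moves `Z` along `φ` into the strict fiber over `T(Max X)`, where `Max X` is terminal. -/
lemma exists_T_map_eq (hAx0 : Ax0 T) {Z X : C} (φ : T.obj Z ≅ T.obj (M.F.obj X)) :
    ∃ g : Z ⟶ M.F.obj X, T.map g = φ.hom := by
  obtain ⟨X', hX', e, he⟩ := hAx0 Z _ φ
  obtain ⟨u, hu, -⟩ := M.terminal X X' (hX'.trans (M.fiber_eq X))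
  exact ⟨e.hom ≫ u, by simp [he, hu]⟩

lemma isIso_of_isIso_T_map (hAx0 : Ax0 T) {X Y : C} (g : M.F.obj X ⟶ M.F.obj Y)
    [IsIso (T.map g)] : IsIso g := by
  obtain ⟨h, hh⟩ := M.exists_T_map_eq hAx0 (asIso (T.map g)).symm
  refine ⟨h, M.eq_id_of_T_map_eq_id _ ?_, M.eq_id_of_T_map_eq_id _ ?_⟩ <;> simp [hh]

end MaxData

theorem isIso_T_map_iff_isIso_max_map_general (T : C ⥤ A) (hAx0 : Ax0 T)
    (M : MaxData T) {X Y : C} (f : X ⟶ Y) :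
    IsIso (T.map f) ↔ IsIso (M.F.map f) := by
  rw [← M.isIso_T_map_F_map_iff]
  exact ⟨fun _ => M.isIso_of_isIso_T_map hAx0 _, fun _ => inferInstance⟩

/-- under (Ax0), (Ax2), (Ax3), for a morphism `f : X ⟶ Y` in `C`, `T(f)` is an
isomorphism if and only if `Max(f)` is an isomorphism. -/
theorem isIso_T_map_iff_isIso_max_map (T : C ⥤ A) (hAx0 : Ax0 T)
    [HasPushouts C] [HasPushouts A] [PreservesColimitsOfShape WalkingSpan T]
    (M : MaxData T) {X Y : C} (f : X ⟶ Y) :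
    IsIso (T.map f) ↔ IsIso (M.F.map f) :=
  isIso_T_map_iff_isIso_max_map_general T hAx0 M f
end

section
/- Under axioms (Ax0), (Ax2), (Ax3), the corestricted functor Max : C → Max(C) is left adjoint to the inclusion functor Max(C) ↪ C. -/
open CategoryTheory Limits

universe v₁ v₂ u₁ u₂

variable {C : Type u₁} [Category.{v₁} C] {A : Type u₂} [Category.{v₂} A]

/-!
`Max X` is terminal in the strict fibre of `T` over `T X`, so any two morphisms into it that
`T` sends to identities agree. This forces `Max (ι_X) = ι_(Max X)`, and makes `ι_(Max X)`
invertible, its inverse being the unique vertical morphism `Max (Max X) ⟶ Max X`. Hence `Max`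
lands in the maximal objects, and `ι` and `ι⁻¹` are the unit and counit of the adjunction.
-/

namespace MaxData

variable {T : C ⥤ A} (M : MaxData T)

lemma hom_ext_of_map_eq_eqToHom {X Y : C} (h : T.obj Y = T.obj X) {g g' : Y ⟶ M.F.obj X}
    (hg : T.map g = eqToHom (h.trans (M.fiber_eq X).symm))
    (hg' : T.map g' = eqToHom (h.trans (M.fiber_eq X).symm)) : g = g' :=
  (M.terminal X Y h).unique hg hg'

lemma F_map_ι_app (X : C) : M.F.map (M.ι.app X) = M.ι.app (M.F.obj X) := by
  have hnat : M.ι.app X ≫ M.F.map (M.ι.app X) = M.ι.app X ≫ M.ι.app (M.F.obj X) :=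
    (M.ι.naturality (M.ι.app X)).symm
  refine M.hom_ext_of_map_eq_eqToHom rfl ?_ (M.ι_eq _)
  have hT := congrArg T.map hnat
  rw [T.map_comp, T.map_comp, M.ι_eq, M.ι_eq, cancel_epi] at hT
  exact hT

instance isIso_ι_app_F_obj (X : C) : IsIso (M.ι.app (M.F.obj X)) := by
  obtain ⟨g, hg, -⟩ := M.terminal X (M.F.obj (M.F.obj X)) ((M.fiber_eq _).trans (M.fiber_eq X))
  refine ⟨g, M.hom_ext_of_map_eq_eqToHom (M.fiber_eq X) ?_ ?_,
    M.hom_ext_of_map_eq_eqToHom (M.fiber_eq _) ?_ ?_⟩ <;>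
    simp [hg, M.ι_eq]

instance isIso_ι_app_obj (Y : ObjectProperty.FullSubcategory (Pmax M)) :
    IsIso (M.ι.app Y.obj) :=
  Y.property

lemma pmax_F_obj (X : C) : Pmax M (M.F.obj X) :=
  M.isIso_ι_app_F_obj X

abbrev toMax : C ⥤ ObjectProperty.FullSubcategory (Pmax M) :=
  ObjectProperty.lift (Pmax M) M.F M.pmax_F_obj

noncomputable def toMaxAdjunction : M.toMax ⊣ ObjectProperty.ι (Pmax M) :=
  Adjunction.mkOfUnitCounit
    { unit := M.ι
      counit :=
        { app := fun Y => ObjectProperty.homMk (inv (M.ι.app Y.obj))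
          naturality := fun Y Y' f => by
            apply ObjectProperty.hom_ext
            simp }
      left_triangle := by
        ext X
        simp [F_map_ι_app]
      right_triangle := by
        ext Y
        simp }

end MaxData

theorem max_left_adjoint_of_inclusion_general (T : C ⥤ A)
    (M : MaxData T) :
    ∃ G : C ⥤ ObjectProperty.FullSubcategory (Pmax M),
      Nonempty (G ⋙ ObjectProperty.ι (Pmax M) ≅ M.F) ∧
      Nonempty (G ⊣ ObjectProperty.ι (Pmax M)) :=
  ⟨M.toMax, ⟨ObjectProperty.liftCompιIso (Pmax M) M.F M.pmax_F_obj⟩, ⟨M.toMaxAdjunction⟩⟩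

/-- under (Ax0), (Ax2), (Ax3), the corestriction of `Max` to the full
subcategory `Max(C)` of maximal objects is a left adjoint of the inclusion
`Max(C) ↪ C`. -/
theorem max_left_adjoint_of_inclusion (T : C ⥤ A) (hAx0 : Ax0 T)
    [HasPushouts C] [HasPushouts A] [PreservesColimitsOfShape WalkingSpan T]
    (M : MaxData T) :
    ∃ G : C ⥤ ObjectProperty.FullSubcategory (Pmax M),
      Nonempty (G ⋙ ObjectProperty.ι (Pmax M) ≅ M.F) ∧
      Nonempty (G ⊣ ObjectProperty.ι (Pmax M)) :=
  max_left_adjoint_of_inclusion_general T M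
end

section
/- Under axioms (Ax0), (Ax2), (Ax3), the functor Max : C → Max(C) exhibits Max(C) as the localization of C at the class of morphisms f such that T(f) is an isomorphism: for any functor F : C → X sending every such f to an isomorphism, there is a functor G : Max(C) → X and a natural isomorphism F ≅ G ∘ Max. -/
/-! Each unit map `ι_X : X ⟶ Max X` lies over an identity of `A`, so a functor inverting all
`T`-isomorphisms inverts `ι`; hence `F ≅ Max ⋙ F`, and `G` is the restriction of `F` to the
maximal objects. -/

open CategoryTheory Limits

universe v₁ v₂ u₁ u₂

variable {C : Type u₁} [Category.{v₁} C] {A : Type u₂} [Category.{v₂} A]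

noncomputable def CategoryTheory.Functor.isoCompOfIsIsoMapApp {D : Type*} [Category D]
    (F : C ⥤ D) {G : C ⥤ C} (ι : 𝟭 C ⟶ G) [∀ X, IsIso (F.map (ι.app X))] : F ≅ G ⋙ F :=
  NatIso.ofComponents (fun X => asIso (F.map (ι.app X)))
    (fun f => by simpa using (F.congr_map (ι.naturality f)))

lemma MaxData.isIso_map_ι {T : C ⥤ A} (M : MaxData T) (X : C) : IsIso (T.map (M.ι.app X)) := by
  rw [M.ι_eq]
  infer_instance

theorem max_is_localization_general (T : C ⥤ A)
    (M : MaxData T)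
    (Mx : C ⥤ ObjectProperty.FullSubcategory (Pmax M))
    (hMx : Mx ⋙ ObjectProperty.ι (Pmax M) ≅ M.F)
    {X : Type*} [Category X] (F : C ⥤ X)
    (hF : ∀ {c c' : C} (f : c ⟶ c'), IsIso (T.map f) → IsIso (F.map f)) :
    ∃ G : ObjectProperty.FullSubcategory (Pmax M) ⥤ X, Nonempty (F ≅ Mx ⋙ G) := by
  have : ∀ c, IsIso (F.map (M.ι.app c)) := fun c => hF _ (M.isIso_map_ι c)
  exact ⟨ObjectProperty.ι (Pmax M) ⋙ F, ⟨F.isoCompOfIsIsoMapApp M.ι ≪≫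
    Functor.isoWhiskerRight hMx.symm F ≪≫ Functor.associator _ _ _⟩⟩

/-- under (Ax0), (Ax2), (Ax3), the functor `Max : C ⥤ Max(C)` exhibits
`Max(C)` as the localization of `C` at the morphisms `f` such that `T(f)` is an
isomorphism: any functor `F : C ⥤ X` inverting these morphisms factors, up to natural
isomorphism, through `Max`. -/
theorem max_is_localization (T : C ⥤ A) (hAx0 : Ax0 T)
    [HasPushouts C] [HasPushouts A] [PreservesColimitsOfShape WalkingSpan T]
    (M : MaxData T)
    (Mx : C ⥤ ObjectProperty.FullSubcategory (Pmax M))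
    (hMx : Mx ⋙ ObjectProperty.ι (Pmax M) ≅ M.F)
    {X : Type*} [Category X] (F : C ⥤ X)
    (hF : ∀ {c c' : C} (f : c ⟶ c'), IsIso (T.map f) → IsIso (F.map f)) :
    ∃ G : ObjectProperty.FullSubcategory (Pmax M) ⥤ X, Nonempty (F ≅ Mx ⋙ G) :=
  max_is_localization_general T M Mx hMx F hF
end

section
/- Suppose T : C → A satisfies (Ax0), (Ax2), (Ax3), (Ax2*), (Ax3*) and (Ax4): there are dualities (involutive contravariant endofunctors) on C and A compatible with T. Then for every C ∈ C one has natural isomorphisms Max(C*) ≅ Min(C)* and Min(C*) ≅ Max(C)*; in particular the duality of C interchanges the subcategories Min(C) and Max(C), and C ↦ Max(C*) defines a duality on Max(C) compatible with T restricted to Max(C). -/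
open CategoryTheory Limits

universe v₁ v₂ u₁ u₂

variable {C : Type u₁} [Category.{v₁} C] {A : Type u₂} [Category.{v₂} A]

/-- The data of the dual functor `Min`: for every `X`, `F.obj X` is an initial object of the
strict fiber of `T` over `T.obj X` (axiom (Ax3*)). -/
structure MinData (T : C ⥤ A) where
  F : C ⥤ C
  ι : F ⟶ 𝟭 C
  fiber_eq : ∀ X : C, T.obj (F.obj X) = T.obj X
  ι_eq : ∀ X : C, T.map (ι.app X) = eqToHom (fiber_eq X)
  initial : ∀ (X Y : C) (h : T.obj Y = T.obj X),
    ∃! g : F.obj X ⟶ Y, T.map g = eqToHom ((fiber_eq X).trans h.symm)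

/-- An object is minimal when the canonical map `ι_X : Min X ⟶ X` is an isomorphism. -/
def Pmin {T : C ⥤ A} (N : MinData T) : C → Prop := fun X => IsIso (N.ι.app X)

/-- A duality on a category `X`: a contravariant endofunctor `D` together with a functorial
identification `(X*)* ≅ X`. -/
structure DualityData (X : Type*) [Category X] where
  D : Xᵒᵖ ⥤ X
  invol : D.rightOp ⋙ D ≅ 𝟭 X

/-!
Call `Z` lift-terminal for `T` if every `Y` with an isomorphism `m : T Y ⟶ T Z` has a unique
`g : Y ⟶ Z` with `T g = m`, and lift-initial if it is lift-terminal for `T.op`. By (Ax0), `Max X`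
is lift-terminal and the maximal objects are exactly the lift-terminal ones; dually `Min` and the
minimal objects are governed by lift-initiality, which turns `Min` for `T` into `Max` for `T.op`.
Unlike the strict fibre conditions of (Ax3), lift-terminality only sees `T` up to isomorphism, so
the duality of `C`, compatible with that of `A` up to isomorphism, exchanges lift-terminal and
lift-initial objects. Thus `D (Min X)` is lift-terminal and receives the `T`-isomorphism
`D ι : D X ⟶ D (Min X)`, which identifies it with `Max (D X)`. These comparison isomorphisms are
natural because maps into a lift-terminal object can be cancelled against `T`-isomorphisms, by a
pushout argument using (Ax2). The same comparison gives `Max (D (Max (D X))) ≅ X` for maximal `X`.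
-/

open Opposite

def IsLiftTerminal (T : C ⥤ A) (Z : C) : Prop :=
  ∀ (Y : C) (m : T.obj Y ⟶ T.obj Z), IsIso m → ∃! g : Y ⟶ Z, T.map g = m

def IsLiftInitial (T : C ⥤ A) (Z : C) : Prop :=
  IsLiftTerminal T.op (op Z)

namespace IsLiftTerminal

variable {T : C ⥤ A} {Z : C}

theorem hom_ext (hZ : IsLiftTerminal T Z) {Y : C} {g₁ g₂ : Y ⟶ Z} [IsIso (T.map g₂)]
    (h : T.map g₁ = T.map g₂) : g₁ = g₂ :=
  (hZ Y _ inferInstance).unique h rfl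

theorem exists_iso {Y : C} (hY : IsLiftTerminal T Y) (hZ : IsLiftTerminal T Z)
    (m : T.obj Y ⟶ T.obj Z) [IsIso m] : ∃ e : Y ≅ Z, T.map e.hom = m := by
  obtain ⟨g, hg, -⟩ := hZ Y m inferInstance
  obtain ⟨g', hg', -⟩ := hY Z (inv m) inferInstance
  refine ⟨⟨g, g', hY.hom_ext ?_, hZ.hom_ext ?_⟩, hg⟩ <;> simp [hg, hg']

theorem of_iso {Z' : C} (e : Z ≅ Z') (hZ' : IsLiftTerminal T Z') : IsLiftTerminal T Z := by
  intro Y m hm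
  obtain ⟨g, hg, hg_uniq⟩ := hZ' Y (m ≫ T.map e.hom) inferInstance
  refine ⟨g ≫ e.inv, by simp [hg], fun g' hg' => ?_⟩
  rw [← hg_uniq (g' ≫ e.hom) (by simp [hg']), Category.assoc, e.hom_inv_id, Category.comp_id]

theorem of_natIso {T' : C ⥤ A} (e : T ≅ T') (hZ : IsLiftTerminal T Z) :
    IsLiftTerminal T' Z := by
  intro Y m hm
  obtain ⟨g, hg, hg_uniq⟩ := hZ Y (e.hom.app Y ≫ m ≫ e.inv.app Z) inferInstance
  refine ⟨g, ?_, fun g' hg' => hg_uniq g' ?_⟩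
  · show T'.map g = m
    rw [← NatIso.naturality_1 e g, hg]
    simp
  · rw [← hg', NatIso.naturality_2]

theorem comp {B : Type*} [Category B] (hZ : IsLiftTerminal T Z) (G : A ⥤ B) [G.Full]
    [G.Faithful] : IsLiftTerminal (T ⋙ G) Z := by
  intro Y m hm
  have : IsIso (G.map (G.preimage m)) := by rwa [G.map_preimage]
  have : IsIso (G.preimage m) := isIso_of_fully_faithful G _
  obtain ⟨g, hg, hg_uniq⟩ := hZ Y (G.preimage m) inferInstance
  refine ⟨g, by simp [hg], fun g' hg' => hg_uniq g' (G.map_injective ?_)⟩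
  simpa using hg'

theorem obj_of_comp {C' : Type*} [Category C'] {E : C' ⥤ C} [E.Full] [E.Faithful] [E.EssSurj]
    {Z : C'} (hZ : IsLiftTerminal (E ⋙ T) Z) : IsLiftTerminal T (E.obj Z) := by
  intro Y m hm
  let i := E.objObjPreimageIso Y
  obtain ⟨g, hg, hg_uniq⟩ := hZ _ (T.map i.hom ≫ m) inferInstance
  rw [Functor.comp_map] at hg
  refine ⟨i.inv ≫ E.map g, by simp [hg], fun g' hg' => ?_⟩
  rw [← hg_uniq (E.preimage (i.hom ≫ g')) (by simp [hg']), Functor.map_preimage,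
    Iso.inv_hom_id_assoc]

theorem eq_of_comp_eq [HasPushouts C] [PreservesColimitsOfShape WalkingSpan T]
    (hZ : IsLiftTerminal T Z) {P Y : C} (j : P ⟶ Y) [IsIso (T.map j)] {h₁ h₂ : Y ⟶ Z}
    (e : j ≫ h₁ = j ≫ h₂) : h₁ = h₂ := by
  have := hasPushout_of_preservesPushout T j (j ≫ h₁)
  -- `T` preserves the pushout, so `T (inr)` is a pushout of the isomorphism `T j`.
  have : IsIso (T.map (pushout.inr j (j ≫ h₁))) := by
    rw [← PreservesPushout.inr_iso_hom]
    infer_instance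
  have map_eq : ∀ k : pushout j (j ≫ h₁) ⟶ Z, pushout.inr _ _ ≫ k = 𝟙 Z →
      T.map k = inv (T.map (pushout.inr j (j ≫ h₁))) := fun k hk =>
    (IsIso.inv_eq_of_hom_inv_id (by rw [← T.map_comp, hk, T.map_id])).symm
  let k₁ := pushout.desc (f := j) (g := j ≫ h₁) h₁ (𝟙 Z) (by simp)
  let k₂ := pushout.desc (f := j) (g := j ≫ h₁) h₂ (𝟙 Z) (by simp [← e])
  have hk₁ := map_eq k₁ (pushout.inr_desc _ _ _)
  have hk₂ := map_eq k₂ (pushout.inr_desc _ _ _)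
  have : IsIso (T.map k₂) := by rw [hk₂]; infer_instance
  have hk : k₁ = k₂ := hZ.hom_ext (hk₁.trans hk₂.symm)
  calc h₁ = pushout.inl _ _ ≫ k₁ := (pushout.inl_desc _ _ _).symm
    _ = pushout.inl _ _ ≫ k₂ := by rw [hk]
    _ = h₂ := pushout.inl_desc _ _ _

end IsLiftTerminal

instance DualityData.isEquivalence {X : Type*} [Category X] (DX : DualityData X) :
    DX.D.IsEquivalence :=
  Functor.IsEquivalence.mk' DX.D.rightOp (NatIso.op DX.invol) DX.invol

section Duality

variable {T : C ⥤ A} (DC : DualityData C) (DA : DualityData A)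

theorem IsLiftInitial.dual (compat : DC.D ⋙ T ≅ T.op ⋙ DA.D) {Z : C}
    (hZ : IsLiftInitial T Z) : IsLiftTerminal T (DC.D.obj (op Z)) :=
  ((hZ.comp DA.D).of_natIso compat.symm).obj_of_comp

theorem IsLiftTerminal.dual (compat : DC.D ⋙ T ≅ T.op ⋙ DA.D) {Z : C}
    (hZ : IsLiftTerminal T Z) : IsLiftInitial T (DC.D.obj (op Z)) := by
  have compat' : T ⋙ DA.D.rightOp ≅ DC.D.rightOp ⋙ T.op :=
    NatIso.ofComponents (fun X => (compat.app (op X)).op)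
      (fun f => Quiver.Hom.unop_inj (by simpa using (compat.hom.naturality f.op).symm))
  exact ((hZ.comp DA.D.rightOp).of_natIso compat').obj_of_comp (E := DC.D.rightOp)

theorem isIso_map_dual_map (compat : DC.D ⋙ T ≅ T.op ⋙ DA.D) {X Y : C} (f : X ⟶ Y)
    [IsIso (T.map f)] : IsIso (T.map (DC.D.map f.op)) :=
  (NatIso.isIso_map_iff compat f.op).2 (by dsimp; infer_instance)

end Duality

namespace MaxData

variable {T : C ⥤ A} (M : MaxData T)

instance isIso_map_ι_s9 (X : C) : IsIso (T.map (M.ι.app X)) := by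
  rw [M.ι_eq]
  infer_instance

def fCompIso : M.F ⋙ T ≅ T :=
  NatIso.ofComponents (fun X => eqToIso (M.fiber_eq X)) fun f => by
    have := congrArg T.map (M.ι.naturality f)
    simp only [Functor.map_comp, M.ι_eq, Functor.id_map] at this
    simp only [Functor.comp_map, eqToIso.hom, comp_eqToHom_iff, Category.assoc, this,
      eqToHom_trans_assoc, eqToHom_refl, Category.id_comp]

variable {M}

theorem isLiftTerminal_obj (hT : Ax0 T) (X : C) : IsLiftTerminal T (M.F.obj X) := by
  intro Y m hm
  obtain ⟨Y', hY', e, he⟩ := hT Y (T.obj X) (asIso m ≪≫ eqToIso (M.fiber_eq X))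
  obtain ⟨g, hg, hg_uniq⟩ := M.terminal X Y' hY'
  refine ⟨e.hom ≫ g, by simp [hg, he], fun g' hg' => ?_⟩
  have hg'' : T.map (e.inv ≫ g') = eqToHom (hY'.trans (M.fiber_eq X).symm) := by
    rw [← cancel_epi (T.map e.hom), ← T.map_comp, e.hom_inv_id_assoc, hg', he]
    simp
  rw [← hg_uniq _ hg'', e.hom_inv_id_assoc]

theorem pmax_iff (hT : Ax0 T) {Z : C} : Pmax M Z ↔ IsLiftTerminal T Z := by
  refine ⟨fun h => ?_, fun hZ => ?_⟩
  · have : IsIso (M.ι.app Z) := h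
    exact (isLiftTerminal_obj hT Z).of_iso (asIso (M.ι.app Z))
  obtain ⟨e, he⟩ := hZ.exists_iso (isLiftTerminal_obj hT Z) (T.map (M.ι.app Z))
  rw [Pmax, ← (isLiftTerminal_obj hT Z).hom_ext he]
  infer_instance

theorem pmax_obj (hT : Ax0 T) (X : C) : Pmax M (M.F.obj X) :=
  (pmax_iff hT).2 (isLiftTerminal_obj hT X)

variable (M) in
noncomputable def isoOfIsLiftTerminal (hT : Ax0 T) [HasPushouts C]
    [PreservesColimitsOfShape WalkingSpan T] {J : Type*} [Category J] {G H : J ⥤ C}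
    (u : G ⟶ H) (hu : ∀ j, IsIso (T.map (u.app j))) (hH : ∀ j, IsLiftTerminal T (H.obj j)) :
    G ⋙ M.F ≅ H := by
  have comparison : ∀ j, ∃ e : M.F.obj (G.obj j) ≅ H.obj j,
      M.ι.app (G.obj j) ≫ e.hom = u.app j := by
    intro j
    obtain ⟨e, he⟩ := (isLiftTerminal_obj hT (G.obj j)).exists_iso (hH j)
      (inv (T.map (M.ι.app (G.obj j))) ≫ T.map (u.app j))
    have := hu j
    exact ⟨e, (hH j).hom_ext (by simp [he])⟩
  choose e he using comparison
  refine NatIso.ofComponents e fun {i j} f => (hH j).eq_of_comp_eq (M.ι.app (G.obj i)) ?_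
  rw [Functor.comp_map, ← M.ι.naturality_assoc, he, reassoc_of% (he i)]
  exact u.naturality f

end MaxData

theorem Ax0.op {T : C ⥤ A} (hT : Ax0 T) : Ax0 T.op := by
  intro X a' f
  obtain ⟨X', hX', g, hg⟩ := hT X.unop a'.unop f.unop.symm
  refine ⟨Opposite.op X', congrArg Opposite.op hX', g.op.symm, Quiver.Hom.unop_inj ?_⟩
  have : T.map g.inv = eqToHom hX' ≫ f.hom.unop := by
    rw [← cancel_epi (T.map g.hom), ← T.map_comp, g.hom_inv_id, T.map_id, hg]
    simp [← unop_comp]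
  simp [this]

theorem preservesColimitsOfShape_walkingSpan_op (T : C ⥤ A)
    [PreservesLimitsOfShape WalkingCospan T] : PreservesColimitsOfShape WalkingSpan T.op :=
  have := preservesLimitsOfShape_of_equiv walkingSpanOpEquiv.symm T
  preservesColimitsOfShape_op WalkingSpan T

namespace MinData

variable {T : C ⥤ A} (N : MinData T)

def op : MaxData T.op where
  F := N.F.op
  ι := NatTrans.op N.ι
  fiber_eq X := congrArg Opposite.op (N.fiber_eq X.unop)
  ι_eq X := by simp [N.ι_eq]
  terminal X Y h := by
    obtain ⟨g, hg, hg_uniq⟩ := N.initial X.unop Y.unop (congrArg Opposite.unop h)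
    refine ⟨g.op, by simp [hg], fun g' hg' => Quiver.Hom.unop_inj (hg_uniq g'.unop ?_)⟩
    simpa using congrArg Quiver.Hom.unop hg'

theorem pmin_iff (hT : Ax0 T) {Z : C} : Pmin N Z ↔ IsLiftInitial T Z :=
  (isIso_op_iff (N.ι.app Z)).symm.trans (N.op.pmax_iff hT.op)

instance isIso_map_ι_s9 (X : C) : IsIso (T.map (N.ι.app X)) := by
  rw [N.ι_eq]
  infer_instance

theorem isLiftInitial_obj (hT : Ax0 T) (X : C) : IsLiftInitial T (N.F.obj X) :=
  N.op.isLiftTerminal_obj hT.op (Opposite.op X)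

noncomputable def isoOfIsLiftInitial (hT : Ax0 T) [HasPullbacks C]
    [PreservesLimitsOfShape WalkingCospan T] {J : Type*} [Category J] {G H : J ⥤ C}
    (u : H ⟶ G) (hu : ∀ j, IsIso (T.map (u.app j))) (hH : ∀ j, IsLiftInitial T (H.obj j)) :
    G ⋙ N.F ≅ H :=
  have := preservesColimitsOfShape_walkingSpan_op T
  (NatIso.removeOp (F := G ⋙ N.F) (G := H) (N.op.isoOfIsLiftTerminal hT.op (NatTrans.op u)
    (fun j => (isIso_op_iff _).2 (hu j.unop)) fun j => hH j.unop)).symm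

end MinData

noncomputable def MaxData.duality {T : C ⥤ A} (M : MaxData T) (DC : DualityData C)
    (DA : DualityData A) (hT : Ax0 T) [HasPushouts C] [PreservesColimitsOfShape WalkingSpan T]
    (compat : DC.D ⋙ T ≅ T.op ⋙ DA.D) :
    DualityData (ObjectProperty.FullSubcategory (Pmax M)) where
  D := ObjectProperty.lift (Pmax M) ((ObjectProperty.ι (Pmax M)).op ⋙ DC.D ⋙ M.F)
    fun _ => M.pmax_obj hT _
  invol := by
    let ι := ObjectProperty.ι (Pmax M)
    -- compare with the components `D (ι_{D X}) ≫ invol_X : D (Max (D X)) ⟶ X`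
    refine Functor.fullyFaithfulCancelRight ι (M.isoOfIsLiftTerminal hT
      (Functor.whiskerRight (Functor.whiskerLeft (ι ⋙ DC.D.rightOp) (NatTrans.op M.ι)) DC.D ≫
        Functor.whiskerLeft ι DC.invol.hom) (fun X => ?_) fun X => (M.pmax_iff hT).1 X.property)
    have := isIso_map_dual_map DC DA compat (M.ι.app (DC.D.obj (op (ι.obj X))))
    simp only [NatTrans.comp_app, Functor.whiskerRight_app, Functor.whiskerLeft_app,
      NatTrans.op_app, Functor.comp_obj, Functor.rightOp_obj, unop_op, T.map_comp]
    infer_instance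

theorem duality_exchanges_min_max_general (T : C ⥤ A) (hAx0 : Ax0 T)
    [HasPushouts C] [PreservesColimitsOfShape WalkingSpan T]
    [HasPullbacks C] [PreservesLimitsOfShape WalkingCospan T]
    (M : MaxData T) (N : MinData T)
    (DC : DualityData C) (DA : DualityData A)
    (compat : DC.D ⋙ T ≅ T.op ⋙ DA.D) :
    Nonempty ((DC.D ⋙ M.F) ≅ (N.F.op ⋙ DC.D)) ∧
    Nonempty ((DC.D ⋙ N.F) ≅ (M.F.op ⋙ DC.D)) ∧
    (∀ X : C, Pmax M X → Pmin N (DC.D.obj (Opposite.op X))) ∧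
    (∀ X : C, Pmin N X → Pmax M (DC.D.obj (Opposite.op X))) ∧
    ∃ Dmax : (ObjectProperty.FullSubcategory (Pmax M))ᵒᵖ ⥤ ObjectProperty.FullSubcategory (Pmax M),
      Nonempty (Dmax ⋙ ObjectProperty.ι (Pmax M) ≅
        (ObjectProperty.ι (Pmax M)).op ⋙ DC.D ⋙ M.F) ∧
      Nonempty (Dmax.rightOp ⋙ Dmax ≅ 𝟭 (ObjectProperty.FullSubcategory (Pmax M))) ∧
      Nonempty ((Dmax ⋙ (ObjectProperty.ι (Pmax M) ⋙ T)) ≅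
        ((ObjectProperty.ι (Pmax M) ⋙ T).op ⋙ DA.D)) := by
  refine ⟨⟨M.isoOfIsLiftTerminal hAx0 (Functor.whiskerRight (NatTrans.op N.ι) DC.D)
      (fun X => isIso_map_dual_map DC DA compat (N.ι.app X.unop))
      fun X => (N.isLiftInitial_obj hAx0 _).dual DC DA compat⟩,
    ⟨N.isoOfIsLiftInitial hAx0 (Functor.whiskerRight (NatTrans.op M.ι) DC.D)
      (fun X => isIso_map_dual_map DC DA compat (M.ι.app X.unop))
      fun X => (M.isLiftTerminal_obj hAx0 _).dual DC DA compat⟩,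
    fun X hX => (N.pmin_iff hAx0).2
      (((M.pmax_iff hAx0).1 hX).dual DC DA compat),
    fun X hX => (M.pmax_iff hAx0).2
      (((N.pmin_iff hAx0).1 hX).dual DC DA compat),
    (M.duality DC DA hAx0 compat).D, ⟨ObjectProperty.liftCompιIso _ _ _⟩,
    ⟨(M.duality DC DA hAx0 compat).invol⟩,
    ⟨Functor.isoWhiskerLeft ((ObjectProperty.ι (Pmax M)).op ⋙ DC.D) M.fCompIso ≪≫
      Functor.isoWhiskerLeft (ObjectProperty.ι (Pmax M)).op compat⟩⟩

/-- under (Ax0), (Ax2), (Ax3), (Ax2*), (Ax3*) and (Ax4) (dualities on `C` and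
`A` compatible with `T`), one has natural isomorphisms `Max(C*) ≅ Min(C)*` and
`Min(C*) ≅ Max(C)*`; in particular the duality of `C` interchanges `Min(C)` and `Max(C)`,
and `C ↦ Max(C*)` defines a duality on `Max(C)` compatible with the restriction of `T`. -/
theorem duality_exchanges_min_max (T : C ⥤ A) (hAx0 : Ax0 T)
    [HasPushouts C] [HasPushouts A] [PreservesColimitsOfShape WalkingSpan T]
    [HasPullbacks C] [HasPullbacks A] [PreservesLimitsOfShape WalkingCospan T]
    (M : MaxData T) (N : MinData T)
    (DC : DualityData C) (DA : DualityData A)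
    (compat : DC.D ⋙ T ≅ T.op ⋙ DA.D) :
    Nonempty ((DC.D ⋙ M.F) ≅ (N.F.op ⋙ DC.D)) ∧
    Nonempty ((DC.D ⋙ N.F) ≅ (M.F.op ⋙ DC.D)) ∧
    (∀ X : C, Pmax M X → Pmin N (DC.D.obj (Opposite.op X))) ∧
    (∀ X : C, Pmin N X → Pmax M (DC.D.obj (Opposite.op X))) ∧
    ∃ Dmax : (ObjectProperty.FullSubcategory (Pmax M))ᵒᵖ ⥤ ObjectProperty.FullSubcategory (Pmax M),
      Nonempty (Dmax ⋙ ObjectProperty.ι (Pmax M) ≅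
        (ObjectProperty.ι (Pmax M)).op ⋙ DC.D ⋙ M.F) ∧
      Nonempty (Dmax.rightOp ⋙ Dmax ≅ 𝟭 (ObjectProperty.FullSubcategory (Pmax M))) ∧
      Nonempty ((Dmax ⋙ (ObjectProperty.ι (Pmax M) ⋙ T)) ≅
        ((ObjectProperty.ι (Pmax M) ⋙ T).op ⋙ DA.D)) :=
  duality_exchanges_min_max_general T hAx0 M N DC DA compat
end

section
/- Let p ≥ 3 be a prime, k a perfect field of characteristic p, K a finite totally ramified extension of W(k)[1/p] of ramification index e, π₁ a fixed p-th root of a uniformizer of K, G_K the absolute Galois group and G₁ = Gal(K̄/K(π₁)). For σ ∈ G_K let ε(σ) denote the image of σ(π₁)/π₁ in O_K̄/p (a p-th root of unity) and set t(σ) = Σ_{i=1}^{p-2} (1 − ε(σ))^i / i. Then t is a cocycle: t(σσ') = t(σ) + σ·t(σ') for all σ, σ' ∈ G_K; t(σ) = 0 for σ ∈ G₁; and for σ ∉ G₁, t(σ) has p-adic valuation 1/(p−1), so in particular t(σ)^{p−1} = 0 in O_K̄/p. -/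
open scoped BigOperators

/-!
Modulo `p`, the polynomial `B(x) = ((1 + x) ^ p - 1 - x ^ p) / p` is the truncated logarithm
`∑_{i<p} (-1)^(i-1) x^i / i`, so `t(σ) = -B(ε(σ) - 1)` as soon as `(ε(σ) - 1) ^ (p - 1) = 0`.
Expanding `(1 + x) ^ p (1 + y) ^ p` shows that `B(x + y + xy) - B(x) - B(y)` is, over `ℤ`, a
combination of `p`, `x ^ p`, `y ^ p` and a polynomial all of whose monomials have degree `≥ p`.
In `O_K̄/p` all of these vanish at `x = ε(σ) - 1`, `y = σ(ε(σ')) - 1`, which have valuation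
`≥ 1/(p-1)`; since `ε(σσ') - 1 = x + y + xy`, this is the cocycle identity. The valuation of
`t(σ) = (1 - ε(σ)) + (1 - ε(σ))² s` is that of its leading term.
-/

/-- `R` plays the role of `O_K̄/p`; for `i < p`, `Ring.inverse (i : R)` is a genuine inverse. -/
noncomputable def tcoc (p : ℕ) {G : Type*} {R : Type*} [CommRing R]
    (ε : G → R) (σ : G) : R :=
  ∑ i ∈ Finset.Icc 1 (p - 2), Ring.inverse (i : R) * (1 - ε σ) ^ i

section BinomialQuotient

variable {R S : Type*} [CommRing R] [CommRing S] (p : ℕ)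

/-- `((1 + x) ^ p - 1 - x ^ p) / p`, which modulo `p` is the truncated `log (1 + x)`. -/
noncomputable def binomialQuotient (x : R) : R :=
  ∑ i ∈ Finset.Ico 1 p, ((p.choose i / p : ℕ) : R) * x ^ i

theorem map_binomialQuotient {F : Type*} [FunLike F R S] [RingHomClass F R S] (f : F) (x : R) :
    f (binomialQuotient p x) = binomialQuotient p (f x) := by
  simp [binomialQuotient]

theorem smul_binomialQuotient {M : Type*} [Monoid M] [MulSemiringAction M R] (m : M) (x : R) :
    m • binomialQuotient p x = binomialQuotient p (m • x) :=
  map_binomialQuotient p (MulSemiringAction.toRingHom M R m) x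

variable {p}

theorem natCast_mul_binomialQuotient (hp : p.Prime) (x : R) :
    (p : R) * binomialQuotient p x = (1 + x) ^ p - 1 - x ^ p := by
  have hcoeff : ∀ i ∈ Finset.Ico 1 p,
      (p : R) * (((p.choose i / p : ℕ) : R) * x ^ i) = x ^ i * p.choose i := by
    intro i hi
    obtain ⟨hi1, hip⟩ := Finset.mem_Ico.mp hi
    rw [← mul_assoc, ← Nat.cast_mul, Nat.mul_div_cancel' (hp.dvd_choose_self (by omega) hip),
      mul_comm]
  rw [binomialQuotient, Finset.mul_sum, Finset.sum_congr rfl hcoeff, add_comm, add_pow,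
    Finset.sum_range_succ, Finset.range_eq_Ico, Finset.sum_eq_sum_Ico_succ_bot hp.pos]
  simp only [one_pow, mul_one, pow_zero, Nat.choose_zero_right, Nat.choose_self, Nat.cast_one,
    zero_add]
  ring

theorem choose_sub_one_eq_neg_one_pow (hp : p.Prime) {j : ℕ} (hj : j < p) :
    (((p - 1).choose j : ℕ) : ZMod p) = (-1) ^ j := by
  induction j with
  | zero => simp
  | succ j ih =>
    have hpascal : (p - 1).choose j + (p - 1).choose (j + 1) = p.choose (j + 1) := by
      rw [← Nat.choose_succ_succ', Nat.sub_add_cancel hp.one_le]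
    have hdvd : ((p.choose (j + 1) : ℕ) : ZMod p) = 0 :=
      (ZMod.natCast_eq_zero_iff _ _).mpr (hp.dvd_choose_self j.succ_ne_zero hj)
    rw [← hpascal, Nat.cast_add, ih (by omega)] at hdvd
    linear_combination hdvd

theorem natCast_mul_choose_div_eq [CharP R p] (hp : p.Prime) {i : ℕ} (hi : i ∈ Finset.Ico 1 p) :
    (i : R) * ((p.choose i / p : ℕ) : R) = (-1) ^ (i - 1) := by
  obtain ⟨hi1, hip⟩ := Finset.mem_Ico.mp hi
  have hnat : i * (p.choose i / p) = (p - 1).choose (i - 1) := by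
    have hpascal := Nat.add_one_mul_choose_eq (p - 1) (i - 1)
    rw [Nat.sub_add_cancel hp.one_le, Nat.sub_add_cancel hi1] at hpascal
    refine Nat.eq_of_mul_eq_mul_left hp.pos ?_
    rw [← mul_assoc, mul_comm p i, mul_assoc,
      Nat.mul_div_cancel' (hp.dvd_choose_self (by omega) hip), hpascal, mul_comm]
  have := congrArg (ZMod.castHom (dvd_refl p) R)
    (choose_sub_one_eq_neg_one_pow hp (j := i - 1) (by omega))
  rw [← hnat] at this
  simpa using this

theorem sum_inverse_mul_neg_pow_eq_neg_binomialQuotient [CharP R p] (hp : p.Prime) {x : R}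
    (hx : x ^ (p - 1) = 0) :
    ∑ i ∈ Finset.Icc 1 (p - 2), Ring.inverse (i : R) * (-x) ^ i = -binomialQuotient p x := by
  have := hp.two_le
  have hterm : ∀ i ∈ Finset.Ico 1 p,
      Ring.inverse (i : R) * (-x) ^ i = -(((p.choose i / p : ℕ) : R) * x ^ i) := by
    intro i hi
    have hmul := natCast_mul_choose_div_eq (R := R) hp hi
    have hunit : IsUnit (i : R) := isUnit_of_mul_isUnit_left (hmul ▸ isUnit_neg_one.pow _)
    obtain ⟨k, rfl⟩ := Nat.exists_eq_add_of_le' (Finset.mem_Ico.mp hi).1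
    rw [Ring.inverse_mul_eq_iff_eq_mul _ _ _ hunit, mul_neg, ← mul_assoc, hmul,
      Nat.add_sub_cancel, neg_pow]
    ring
  have hIco : Finset.Ico 1 p = insert (p - 1) (Finset.Icc 1 (p - 2)) := by
    ext i; simp only [Finset.mem_Ico, Finset.mem_Icc, Finset.mem_insert]; omega
  rw [binomialQuotient, hIco, Finset.sum_insert (by simp; omega), hx, mul_zero, zero_add,
    ← Finset.sum_neg_distrib]
  refine Finset.sum_congr rfl fun i hi => hterm i ?_
  simp only [Finset.mem_Icc, Finset.mem_Ico] at hi ⊢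
  omega

end BinomialQuotient

section MonomialIdeal

open MvPolynomial

variable {R : Type*} [CommRing R]

theorem aeval_eq_zero_of_mem_pow_idealOfVars {n : ℕ} {x y : R}
    (hxy : ∀ j k, n ≤ j + k → x ^ j * y ^ k = 0) {f : MvPolynomial (Fin 2) ℤ}
    (hf : f ∈ idealOfVars (Fin 2) ℤ ^ n) : aeval ![x, y] f = 0 := by
  rw [aeval_def, eval₂_eq']
  refine Finset.sum_eq_zero fun d hd => ?_
  have hdeg : n ≤ d 0 + d 1 := by
    simpa [Finsupp.degree_eq_sum, Fin.sum_univ_two] using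
      (mem_pow_idealOfVars_iff n f).mp hf d hd
  simp [Fin.prod_univ_two, hxy _ _ hdeg]

theorem exists_C_mul_eq_add_add_mul_pow_sub {p : ℕ} (hp : p.Prime) :
    ∃ g ∈ idealOfVars (Fin 2) ℤ ^ p, C (p : ℤ) * g =
      (X 0 + X 1 + X 0 * X 1) ^ p - X 0 ^ p - X 1 ^ p - (X 0 * X 1) ^ p := by
  have := Fact.mk hp
  set f : MvPolynomial (Fin 2) ℤ :=
    (X 0 + X 1 + X 0 * X 1) ^ p - X 0 ^ p - X 1 ^ p - (X 0 * X 1) ^ p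
  have hX : ∀ i, X i ∈ idealOfVars (Fin 2) ℤ := fun i => Ideal.subset_span ⟨i, rfl⟩
  have hf : f ∈ idealOfVars (Fin 2) ℤ ^ p := by
    refine Ideal.sub_mem _ (Ideal.sub_mem _ (Ideal.sub_mem _ ?_ ?_) ?_) ?_ <;>
      refine Ideal.pow_mem_pow ?_ p
    · exact Ideal.add_mem _ (Ideal.add_mem _ (hX 0) (hX 1)) (Ideal.mul_mem_right _ _ (hX 0))
    · exact hX 0
    · exact hX 1
    · exact Ideal.mul_mem_right _ _ (hX 0)
  have hmod : map (Int.castRingHom (ZMod p)) f = 0 := by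
    simp only [f, map_sub, map_pow, map_add, map_mul, map_X, add_pow_char, mul_pow]
    ring
  obtain ⟨g, hg⟩ : C (p : ℤ) ∣ f := (C_dvd_iff_dvd_coeff _ _).mpr fun d => by
    simpa [coeff_map, ZMod.intCast_zmod_eq_zero_iff_dvd] using congrArg (coeff d) hmod
  refine ⟨g, (mem_pow_idealOfVars_iff' p g).mpr fun d hd => ?_, hg.symm⟩
  have := (mem_pow_idealOfVars_iff' p f).mp hf d hd
  rw [hg, coeff_C_mul] at this
  exact (mul_eq_zero.mp this).resolve_left (by exact_mod_cast hp.ne_zero)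

theorem binomialQuotient_add_add_mul {p : ℕ} [CharP R p] (hp : p.Prime) {x y : R}
    (hxy : ∀ j k, p ≤ j + k → x ^ j * y ^ k = 0) :
    binomialQuotient p (x + y + x * y) = binomialQuotient p x + binomialQuotient p y := by
  obtain ⟨g, hg_mem, hg⟩ := exists_C_mul_eq_add_add_mul_pow_sub hp
  set U : MvPolynomial (Fin 2) ℤ := X 0
  set V : MvPolynomial (Fin 2) ℤ := X 1
  rw [map_natCast] at hg
  have hU := natCast_mul_binomialQuotient hp U
  have hV := natCast_mul_binomialQuotient hp V
  have hUV := natCast_mul_binomialQuotient hp (U + V + U * V)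
  rw [show 1 + (U + V + U * V) = (1 + U) * (1 + V) by ring, mul_pow] at hUV
  have key : binomialQuotient p (U + V + U * V) = binomialQuotient p U + binomialQuotient p V +
      binomialQuotient p U * V ^ p + binomialQuotient p V * U ^ p +
      p * binomialQuotient p U * binomialQuotient p V - g := by
    refine mul_left_cancel₀ (Nat.cast_ne_zero.mpr hp.ne_zero) ?_
    linear_combination hUV + hg - (1 + V) ^ p * hU - (1 + U ^ p + p * binomialQuotient p U) * hV
  have hxp : x ^ p = 0 := by simpa using hxy p 0 le_self_add
  have hyp : y ^ p = 0 := by simpa using hxy 0 p le_add_self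
  have := congrArg (aeval ![x, y]) key
  simp only [map_binomialQuotient, map_add, map_sub, map_mul, map_pow, map_natCast, U, V,
    aeval_X, Matrix.cons_val_zero, Matrix.cons_val_one,
    aeval_eq_zero_of_mem_pow_idealOfVars hxy hg_mem, CharP.cast_eq_zero, hxp, hyp] at this
  simpa using this

end MonomialIdeal

section TruncatedValuation

variable {R : Type*} [CommRing R] {v : R → WithTop ℚ}

theorem val_le_val_neg (hv0 : ∀ x, 0 ≤ v x) (hvmul : ∀ x y, v x + v y ≤ v (x * y)) (x : R) :
    v x ≤ v (-x) := by
  simpa [neg_one_mul] using (le_add_of_nonneg_left (hv0 (-1))).trans (hvmul (-1) x)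

theorem nsmul_val_le_val_pow (hv0 : ∀ x, 0 ≤ v x) (hvmul : ∀ x y, v x + v y ≤ v (x * y))
    (x : R) (n : ℕ) : n • v x ≤ v (x ^ n) := by
  induction n with
  | zero => simpa using hv0 1
  | succ n ih => rw [succ_nsmul, pow_succ]; exact (add_le_add_left ih _).trans (hvmul _ _)

theorem pow_mul_pow_eq_zero_of_le_val (hv0 : ∀ x, 0 ≤ v x)
    (hvmul : ∀ x y, v x + v y ≤ v (x * y)) (htrunc : ∀ x, (1 : WithTop ℚ) ≤ v x → x = 0)
    {c : ℚ} {n : ℕ} (hnc : 1 ≤ n * c) {x y : R} (hx : c ≤ v x) (hy : c ≤ v y) {j k : ℕ}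
    (hjk : n ≤ j + k) : x ^ j * y ^ k = 0 := by
  refine htrunc _ ?_
  have hc : 0 ≤ c := by
    by_contra! h; nlinarith [(Nat.cast_nonneg n : (0 : ℚ) ≤ n)]
  have hle : (1 : ℚ) ≤ j • c + k • c := by
    rw [← add_nsmul, nsmul_eq_mul]
    exact hnc.trans (mul_le_mul_of_nonneg_right (by exact_mod_cast hjk) hc)
  calc (1 : WithTop ℚ) ≤ ((j • c + k • c : ℚ) : WithTop ℚ) := by exact_mod_cast hle
    _ = j • (c : WithTop ℚ) + k • (c : WithTop ℚ) := by push_cast; rfl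
    _ ≤ j • v x + k • v y :=
      add_le_add (nsmul_le_nsmul_right hx j) (nsmul_le_nsmul_right hy k)
    _ ≤ v (x ^ j) + v (y ^ k) :=
      add_le_add (nsmul_val_le_val_pow hv0 hvmul x j) (nsmul_val_le_val_pow hv0 hvmul y k)
    _ ≤ v (x ^ j * y ^ k) := hvmul _ _

theorem val_add_sq_mul_eq (hv0 : ∀ x, 0 ≤ v x) (hvmul : ∀ x y, v x + v y ≤ v (x * y))
    (hvadd' : ∀ x y, v x ≠ v y → v (x + y) = min (v x) (v y)) {c : ℚ} (hc : 0 < c)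
    {z : R} (hz : v z = c) (s : R) : v (z + z ^ 2 * s) = c := by
  have hlt : v z < v (z ^ 2 * s) := calc
    v z = (c : WithTop ℚ) := hz
    _ < 2 • (c : WithTop ℚ) := by rw [← WithTop.coe_nsmul]; exact_mod_cast by simp; linarith
    _ = 2 • v z + 0 := by rw [hz, add_zero]
    _ ≤ v (z ^ 2) + v s := add_le_add (nsmul_val_le_val_pow hv0 hvmul z 2) (hv0 s)
    _ ≤ v (z ^ 2 * s) := hvmul _ _
  rw [hvadd' _ _ hlt.ne, min_eq_left hlt.le, hz]

end TruncatedValuation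

theorem tcoc_eq_neg_binomialQuotient {G R : Type*} [CommRing R] {p : ℕ} [CharP R p]
    (hp : p.Prime) (ε : G → R) {σ : G} (h : (ε σ - 1) ^ (p - 1) = 0) :
    tcoc p ε σ = -binomialQuotient p (ε σ - 1) := by
  rw [← sum_inverse_mul_neg_pow_eq_neg_binomialQuotient hp h, tcoc]
  simp only [neg_sub]

theorem tcoc_eq_add_sq_mul {G R : Type*} [CommRing R] {p : ℕ} (hp3 : 3 ≤ p) (ε : G → R)
    (σ : G) : ∃ s, tcoc p ε σ = (1 - ε σ) + (1 - ε σ) ^ 2 * s := by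
  have hIcc : Finset.Icc 1 (p - 2) = insert 1 (Finset.Icc 2 (p - 2)) := by
    ext i; simp only [Finset.mem_Icc, Finset.mem_insert]; omega
  refine ⟨∑ i ∈ Finset.Icc 2 (p - 2), Ring.inverse (i : R) * (1 - ε σ) ^ (i - 2), ?_⟩
  rw [tcoc, hIcc, Finset.sum_insert (by simp), Finset.mul_sum, Nat.cast_one, Ring.inverse_one,
    one_mul, pow_one]
  refine congrArg _ (Finset.sum_congr rfl fun i hi => ?_)
  rw [mul_left_comm, ← pow_add, Nat.add_sub_cancel' (Finset.mem_Icc.mp hi).1]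

theorem t_is_cocycle_general (p : ℕ) (hp : p.Prime) (hp3 : 3 ≤ p)
    {G : Type*} [Group G] (G₁ : Subgroup G)
    {R : Type*} [CommRing R] [CharP R p] [MulSemiringAction G R]
    (v : R → WithTop ℚ)
    (hv0 : ∀ x : R, 0 ≤ v x)
    (hvzero : v 0 = ⊤)
    (hvmul : ∀ x y : R, v x + v y ≤ v (x * y))
    (hvadd' : ∀ x y : R, v x ≠ v y → v (x + y) = min (v x) (v y))
    (htrunc : ∀ x : R, (1 : WithTop ℚ) ≤ v x → x = 0)
    (hvequiv : ∀ (σ : G) (x : R), v (σ • x) = v x)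
    (ε : G → R)
    (hcocycle : ∀ σ σ' : G, ε (σ * σ') = ε σ * σ • ε σ')
    (hker : ∀ σ : G, σ ∈ G₁ ↔ ε σ = 1)
    (hval : ∀ σ : G, σ ∉ G₁ →
      v (1 - ε σ) = (((1 : ℚ) / ((p : ℚ) - 1) : ℚ) : WithTop ℚ)) :
    (∀ σ σ' : G, tcoc p ε (σ * σ') = tcoc p ε σ + σ • tcoc p ε σ') ∧
    (∀ σ ∈ G₁, tcoc p ε σ = 0) ∧
    (∀ σ : G, σ ∉ G₁ →
      v (tcoc p ε σ) = (((1 : ℚ) / ((p : ℚ) - 1) : ℚ) : WithTop ℚ) ∧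
      tcoc p ε σ ^ (p - 1) = 0) := by
  set q : ℚ := 1 / ((p : ℚ) - 1)
  have hp1 : (0 : ℚ) < p - 1 := by
    have : (3 : ℚ) ≤ p := by exact_mod_cast hp3
    linarith
  have hq : ((p - 1 : ℕ) : ℚ) * q = 1 := by
    rw [Nat.cast_sub hp.one_le, Nat.cast_one]
    exact mul_one_div_cancel hp1.ne'
  have hvε : ∀ τ, (q : WithTop ℚ) ≤ v (ε τ - 1) := fun τ => by
    refine le_trans ?_ (by simpa using val_le_val_neg hv0 hvmul (1 - ε τ))
    by_cases hτ : τ ∈ G₁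
    · simp [(hker τ).mp hτ, hvzero]
    · exact (hval τ hτ).ge
  have hnil : ∀ {x y : R}, (q : WithTop ℚ) ≤ v x → (q : WithTop ℚ) ≤ v y →
      ∀ {j k : ℕ}, p - 1 ≤ j + k → x ^ j * y ^ k = 0 :=
    fun hx hy _ _ => pow_mul_pow_eq_zero_of_le_val hv0 hvmul htrunc hq.ge hx hy
  have hpow : ∀ {x : R}, (q : WithTop ℚ) ≤ v x → x ^ (p - 1) = 0 := fun hx => by
    simpa using hnil hx hx (j := p - 1) (k := 0) le_rfl
  have ht : ∀ τ, tcoc p ε τ = -binomialQuotient p (ε τ - 1) := fun τ =>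
    tcoc_eq_neg_binomialQuotient hp ε (hpow (hvε τ))
  refine ⟨fun σ σ' => ?_, fun σ hσ => ?_, fun σ hσ => ?_⟩
  · have hy : (q : WithTop ℚ) ≤ v (σ • (ε σ' - 1)) := (hvequiv σ _).symm ▸ hvε σ'
    have hprod : ε (σ * σ') - 1 =
        (ε σ - 1) + σ • (ε σ' - 1) + (ε σ - 1) * σ • (ε σ' - 1) := by
      rw [hcocycle, smul_sub, smul_one]; ring
    rw [ht, ht, ht, smul_neg, hprod, smul_binomialQuotient,
      binomialQuotient_add_add_mul hp fun j k hjk => hnil (hvε σ) hy (by omega)]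
    ring
  · obtain ⟨s, hs⟩ := tcoc_eq_add_sq_mul hp3 ε σ
    rw [hs, (hker σ).mp hσ]
    ring
  · obtain ⟨s, hs⟩ := tcoc_eq_add_sq_mul hp3 ε σ
    have hvt : v (tcoc p ε σ) = q :=
      hs ▸ val_add_sq_mul_eq hv0 hvmul hvadd' (one_div_pos.mpr hp1) (hval σ hσ) s
    exact ⟨hvt, hpow hvt.ge⟩

/-- in the setting of a finite totally ramified extension `K` of `W(k)[1/p]`
with fixed `p`-th root `π₁` of a uniformizer, the ring `R = O_K̄/p` carries an action of
`G_K`, a truncated (additive) valuation `v` normalized by `v_p(p) = 1`, and the map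
`ε : G_K → R`, `σ ↦ σ(π₁)/π₁`, is a multiplicative cocycle with values in the `p`-th roots
of unity whose kernel is `G₁` and with `v(1 - ε σ) = 1/(p-1)` for `σ ∉ G₁`.  Then
`t(σ) = ∑_{i=1}^{p-2} (1 - ε σ)^i / i` is a cocycle: `t(σσ') = t(σ) + σ·t(σ')`; `t(σ) = 0`
for `σ ∈ G₁`; and for `σ ∉ G₁`, `t(σ)` has valuation `1/(p-1)`, so in particular
`t(σ)^(p-1) = 0`. -/
theorem t_is_cocycle (p : ℕ) (hp : p.Prime) (hp3 : 3 ≤ p)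
    {G : Type*} [Group G] (G₁ : Subgroup G)
    {R : Type*} [CommRing R] [CharP R p] [MulSemiringAction G R]
    (v : R → WithTop ℚ)
    (hv0 : ∀ x : R, 0 ≤ v x)
    (hvzero : v 0 = ⊤)
    (hvone : v 1 = 0)
    (hvmul : ∀ x y : R, v x + v y ≤ v (x * y))
    (hvadd : ∀ x y : R, min (v x) (v y) ≤ v (x + y))
    (hvadd' : ∀ x y : R, v x ≠ v y → v (x + y) = min (v x) (v y))
    (htrunc : ∀ x : R, (1 : WithTop ℚ) ≤ v x → x = 0)
    (hvequiv : ∀ (σ : G) (x : R), v (σ • x) = v x)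
    (ε : G → R)
    (hcocycle : ∀ σ σ' : G, ε (σ * σ') = ε σ * σ • ε σ')
    (hroot : ∀ σ : G, ε σ ^ p = 1)
    (hker : ∀ σ : G, σ ∈ G₁ ↔ ε σ = 1)
    (hval : ∀ σ : G, σ ∉ G₁ →
      v (1 - ε σ) = (((1 : ℚ) / ((p : ℚ) - 1) : ℚ) : WithTop ℚ)) :
    (∀ σ σ' : G, tcoc p ε (σ * σ') = tcoc p ε σ + σ • tcoc p ε σ') ∧
    (∀ σ ∈ G₁, tcoc p ε σ = 0) ∧
    (∀ σ : G, σ ∉ G₁ →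
      v (tcoc p ε σ) = (((1 : ℚ) / ((p : ℚ) - 1) : ℚ) : WithTop ℚ) ∧
      tcoc p ε σ ^ (p - 1) = 0) :=
  t_is_cocycle_general p hp hp3 G₁ v hv0 hvzero hvmul hvadd' htrunc hvequiv ε hcocycle hker hval
end
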